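/- arXiv:2604.16781 — 2 statements merged into one kernel-verified Lean document; each statement's English description precedes it below -/
import Mathlib

section
/- For the pulsone y[n] = (1/√N) ∑_{d ∈ Z} e^{2πi d l₀/N} δ[n − k₀ − dM] (as an MN-periodic sequence) and any MN-periodic sequence x, the cross-ambiguity factorizes as A_{x,y}[k,l] = (1/√N) · (phase) · ∑_{l̄ ∈ Z_N} x[(k+k₀) mod M + l̄ M] e^{−2πi (l + l₀) l̄ / N}, where the phase has modulus 1. In particular, for fixed k, the values {A_{x,y}[k,l] : l ∈ Z_N} are (up to unimodular phases) the values of an N-point discrete Fourier transform of the subsampled sequence l̄ ↦ x[(k+k₀) mod M + l̄ M]. -/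
/-- Cross-ambiguity function of `MN`-periodic sequences. -/
noncomputable def amb (L : ℕ) (x y : Fin L → ℂ) (k l : Fin L) : ℂ :=
  ∑ n : Fin L, x n * (starRingEnd ℂ) (y (n - k)) *
    Complex.exp (-(2 * Real.pi * Complex.I * (l.val : ℂ) * ((n - k).val : ℂ) / (L : ℂ)))

/-- Zak-OTFS pulsone localized at `(k₀, l₀)`. -/
noncomputable def pulsone (M N : ℕ) (k₀ l₀ : ℕ) (n : Fin (M * N)) : ℂ :=
  if n.val % M = k₀ then
    (1 / Real.sqrt N) *
      Complex.exp (2 * Real.pi * Complex.I * (l₀ : ℂ) * ((n.val / M : ℕ) : ℂ) / (N : ℂ))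
  else 0

theorem subsample_index_lt (M N : ℕ) (hM : 0 < M) (hN : 0 < N) (a : ℕ) (p : Fin N) :
    a % M + p.val * M < M * N := by
  have h1 : a % M < M := Nat.mod_lt _ hM
  have h2 : p.val + 1 ≤ N := p.isLt
  have h3 : (p.val + 1) * M ≤ N * M := Nat.mul_le_mul_right M h2
  have h4 : (p.val + 1) * M = p.val * M + M := Nat.succ_mul _ _
  have h5 : M * N = N * M := Nat.mul_comm M N
  omega

/-!
Substituting `m = n - k`, the pulsone restricts the sum to the residue class `m = k₀ + M b`,
`b ∈ Z_N`, on which it is `e^{2πi l₀ b/N}/√N`. Writing `k + k₀ = r + M s` with `r < M`, the sample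
of `x` is at `r + M ((b + s) mod N)`, and the exponentials combine to `e^{-2πi (l + l₀) b/N}` times
a `b`-independent phase. By `N`-periodicity this equals `e^{-2πi (l + l₀) l̄/N}` with
`l̄ = (b + s) mod N`, up to the phase `e^{2πi (l + l₀) s/N}`; reindexing by `l̄` gives the DFT.
-/

open Complex Finset

lemma amb_eq_sum_shift {L : ℕ} [NeZero L] (x y : Fin L → ℂ) (k l : Fin L) :
    amb L x y k l = ∑ m : Fin L, x (m + k) * (starRingEnd ℂ) (y m) *
      exp (-(2 * Real.pi * I * (l.val : ℂ) * (m.val : ℂ) / (L : ℂ))) :=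
  Fintype.sum_equiv (Equiv.subRight k) _ _ fun n => by simp

lemma add_mul_lt_mul_of_lt {M N a b : ℕ} (ha : a < M) (hb : b < N) : a + M * b < M * N :=
  calc a + M * b < M * (b + 1) := by rw [Nat.mul_succ]; omega
    _ ≤ M * N := Nat.mul_le_mul_left M hb

lemma Fin.sum_eq_sum_residue_class {β : Type*} [AddCommMonoid β] {M N k₀ : ℕ} (hk₀ : k₀ < M)
    (f : Fin (M * N) → β) (hf : ∀ m : Fin (M * N), m.val % M ≠ k₀ → f m = 0) :
    ∑ m, f m = ∑ b : Fin N, f ⟨k₀ + M * b.val, add_mul_lt_mul_of_lt hk₀ b.isLt⟩ := by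
  let e : Fin N × Fin M ≃ Fin (M * N) := finProdFinEquiv.trans (finCongr (Nat.mul_comm N M))
  rw [← e.sum_comp, Fintype.sum_prod_type]
  refine sum_congr rfl fun b _ => Fintype.sum_eq_single (⟨k₀, hk₀⟩ : Fin M) fun a ha => hf _ ?_
  simp only [e, Equiv.trans_apply, finCongr_apply, Fin.val_cast, finProdFinEquiv_apply_val,
    Nat.add_mul_mod_self_left, Nat.mod_eq_of_lt a.isLt]
  exact fun h => ha (Fin.ext h)

lemma pulsone_apply_of_mod_ne {M N k₀ l₀ : ℕ} {n : Fin (M * N)} (hn : n.val % M ≠ k₀) :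
    pulsone M N k₀ l₀ n = 0 :=
  if_neg hn

lemma pulsone_apply_residue {M N k₀ l₀ b : ℕ} (hk₀ : k₀ < M) (h : k₀ + M * b < M * N) :
    pulsone M N k₀ l₀ ⟨k₀ + M * b, h⟩ =
      1 / Real.sqrt N * exp (2 * Real.pi * I * (l₀ : ℂ) * (b : ℂ) / (N : ℂ)) := by
  have hmod : (k₀ + M * b) % M = k₀ := by
    rw [Nat.add_mul_mod_self_left, Nat.mod_eq_of_lt hk₀]
  have hdiv : (k₀ + M * b) / M = b := by
    rw [Nat.add_mul_div_left _ _ (by omega), Nat.div_eq_of_lt hk₀, Nat.zero_add]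
  simp only [pulsone, hmod, hdiv, if_true]

lemma exp_neg_two_pi_I_mul_mod (c j N : ℕ) :
    exp (-(2 * Real.pi * I * (c : ℂ) * ((j % N : ℕ) : ℂ) / (N : ℂ))) =
      exp (-(2 * Real.pi * I * (c : ℂ) * (j : ℂ) / (N : ℂ))) := by
  rcases Nat.eq_zero_or_pos N with rfl | hN
  · simp
  have hj : ((j % N : ℕ) : ℂ) = j - N * (j / N : ℕ) := by
    rw [eq_sub_iff_add_eq]; exact_mod_cast Nat.mod_add_div j N
  have hN' : (N : ℂ) ≠ 0 := by exact_mod_cast hN.ne'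
  generalize j / N = q at hj
  rw [exp_eq_exp_iff_exists_int, hj]
  refine ⟨c * q, ?_⟩
  push_cast
  field_simp
  ring

lemma pulsone_phase (M N l l₀ k₀ b s : ℕ) [NeZero M] [NeZero N] :
    (starRingEnd ℂ) (exp (2 * Real.pi * I * (l₀ : ℂ) * (b : ℂ) / (N : ℂ))) *
        exp (-(2 * Real.pi * I * (l : ℂ) * ((k₀ + M * b : ℕ) : ℂ) / ((M * N : ℕ) : ℂ))) =
      exp (((2 * Real.pi * (((l : ℝ) + l₀) * s / N - (l : ℝ) * k₀ / (M * N)) : ℝ) : ℂ) * I) *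
        exp (-(2 * Real.pi * I * ((l : ℂ) + (l₀ : ℂ)) * (((b + s) % N : ℕ) : ℂ) / (N : ℂ))) := by
  have hperiod := exp_neg_two_pi_I_mul_mod (l + l₀) (b + s) N
  push_cast at hperiod
  rw [hperiod, ← exp_conj, ← exp_add, ← exp_add]
  congr 1
  simp only [map_mul, map_div₀, conj_I, map_natCast, map_ofNat, conj_ofReal]
  have hM : (M : ℂ) ≠ 0 := NeZero.ne _
  have hN : (N : ℂ) ≠ 0 := NeZero.ne _
  push_cast
  field_simp
  ring

lemma add_mul_add_mod_mul {M : ℕ} (hM : 0 < M) (N k₀ b k : ℕ) :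
    (k₀ + M * b + k) % (M * N) = (k + k₀) % M + (b + (k + k₀) / M) % N * M := by
  have hsum : k₀ + M * b + k = k + k₀ + M * b := by ring
  rw [Nat.mod_mul, hsum, Nat.add_mul_mod_self_left, Nat.add_mul_div_left _ _ hM]
  ac_rfl

lemma residue_add_eq {M N k₀ : ℕ} (hM : 0 < M) (hN : 0 < N) [NeZero N]
    (k : Fin (M * N)) (b : Fin N) (h : k₀ + M * b < M * N) :
    (⟨k₀ + M * b.val, h⟩ + k : Fin (M * N)) =
      ⟨(k.val + k₀) % M + (b + Fin.ofNat N ((k.val + k₀) / M)).val * M,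
        subsample_index_lt M N hM hN _ _⟩ :=
  Fin.ext <| by
    change (k₀ + M * b + k) % (M * N) =
      (k.val + k₀) % M + (b + Fin.ofNat N ((k.val + k₀) / M)).val * M
    rw [Fin.val_add, Fin.val_ofNat, Nat.add_mod_mod]
    exact add_mul_add_mod_mul hM N k₀ b k

theorem pulsone_cross_ambiguity_factorization_general (M N : ℕ) (hM : 0 < M) (hN : 0 < N)
    (k₀ l₀ : ℕ) (hk₀ : k₀ < M)
    (x : Fin (M * N) → ℂ) (k l : Fin (M * N)) :
    ∃ ph : ℂ, ‖ph‖ = 1 ∧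
      amb (M * N) x (pulsone M N k₀ l₀) k l =
        (1 / Real.sqrt N) * ph *
          ∑ lb : Fin N,
            x ⟨(k.val + k₀) % M + lb.val * M, subsample_index_lt M N hM hN _ lb⟩ *
              Complex.exp (-(2 * Real.pi * Complex.I *
                ((l.val : ℂ) + (l₀ : ℂ)) * (lb.val : ℂ) / (N : ℂ))) := by
  have : NeZero M := ⟨hM.ne'⟩
  have : NeZero N := ⟨hN.ne'⟩
  have : NeZero (M * N) := ⟨(Nat.mul_pos hM hN).ne'⟩
  set s := (k.val + k₀) / M
  refine ⟨_, norm_exp_ofReal_mul_I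
    (2 * Real.pi * (((l.val : ℝ) + l₀) * s / N - (l.val : ℝ) * k₀ / (M * N))), ?_⟩
  rw [amb_eq_sum_shift, Fin.sum_eq_sum_residue_class hk₀ _
      fun m hm => by rw [pulsone_apply_of_mod_ne hm, map_zero, mul_zero, zero_mul], mul_sum]
  refine Fintype.sum_equiv (Equiv.addRight (Fin.ofNat N s)) _ _ fun b => ?_
  have hshift : (b + Fin.ofNat N s).val = (b + s) % N := by
    rw [Fin.val_add, Fin.val_ofNat, Nat.add_mod_mod]
  have hphase := pulsone_phase M N l l₀ k₀ b s
  rw [← hshift] at hphase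
  dsimp only [Equiv.coe_addRight]
  rw [residue_add_eq hM hN, pulsone_apply_residue hk₀, map_mul, map_div₀, map_one, conj_ofReal]
  linear_combination (x ⟨(k.val + k₀) % M + (b + Fin.ofNat N s).val * M,
    subsample_index_lt M N hM hN _ _⟩ / Real.sqrt N) * hphase

/-- Cross-ambiguity with a pulsone factorizes, up to a unimodular phase, as a
normalized `N`-point DFT of the subsampled sequence `l̄ ↦ x[(k+k₀) mod M + l̄M]`:
`A_{x,y}[k,l] = (1/√N)·(phase)·∑_{l̄ ∈ Z_N} x[(k+k₀) mod M + l̄M] e^{−2πi(l+l₀)l̄/N}`. -/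
theorem pulsone_cross_ambiguity_factorization (M N : ℕ) (hM : 0 < M) (hN : 0 < N)
    (k₀ l₀ : ℕ) (hk₀ : k₀ < M) (hl₀ : l₀ < N)
    (x : Fin (M * N) → ℂ) (k l : Fin (M * N)) :
    ∃ ph : ℂ, ‖ph‖ = 1 ∧
      amb (M * N) x (pulsone M N k₀ l₀) k l =
        (1 / Real.sqrt N) * ph *
          ∑ lb : Fin N,
            x ⟨(k.val + k₀) % M + lb.val * M, subsample_index_lt M N hM hN _ lb⟩ *
              Complex.exp (-(2 * Real.pi * Complex.I *
                ((l.val : ℂ) + (l₀ : ℂ)) * (lb.val : ℂ) / (N : ℂ))) :=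
  pulsone_cross_ambiguity_factorization_general M N hM hN k₀ l₀ hk₀ x k l
end

section
/- Suppose x is a unit-norm MN-periodic sequence whose self-ambiguity satisfies A_x[0,0] = 1 and A_x[k',l'] = 0 for all (k',l') ∈ K_S \ {(0,0)}, where S ⊆ Z_{MN} × Z_{MN} is the support of a function h and K_S = {(k',l') : S ∩ (S + (k',l')) ≠ ∅}. Define the noiseless received sequence y[n] = ∑_{(k,l) ∈ S} h[k,l] x[(n−k) mod MN] e^{2πi l(n−k)/(MN)}. Then the cross-ambiguity estimate recovers the channel exactly on its support: A_{y,x}[k,l] = h[k,l] · (unimodular phase independent of h) for every (k,l) ∈ S. In the simplest normalization, A_{y,x}[k,l] = h[k,l] for all (k,l) ∈ S. -/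
open Complex Finset

namespace Fin

variable {L : ℕ}

lemma natCast_val_add_zmod (a b : Fin L) :
    (((a + b).val : ℕ) : ZMod L) = a.val + b.val := by
  rw [val_add, ZMod.natCast_mod, Nat.cast_add]

lemma natCast_val_sub_zmod [NeZero L] (a b : Fin L) :
    (((a - b).val : ℕ) : ZMod L) = a.val - b.val := by
  rw [eq_sub_iff_add_eq, ← natCast_val_add_zmod, sub_add_cancel]

end Fin

section Ambiguity

noncomputable def timeFreqShift (L : ℕ) (k l : Fin L) (x : Fin L → ℂ) (n : Fin L) : ℂ :=
  x (n - k) * exp (2 * Real.pi * I * (l.val : ℂ) * ((n - k).val : ℂ) / ((L : ℕ) : ℂ))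

variable {L : ℕ}

lemma amb_sum_left {ι : Type*} (s : Finset ι) (f : ι → Fin L → ℂ) (y : Fin L → ℂ) (k l : Fin L) :
    amb L (fun n => ∑ i ∈ s, f i n) y k l = ∑ i ∈ s, amb L (f i) y k l := by
  simp only [amb, sum_mul]
  exact sum_comm

lemma amb_const_mul_left (c : ℂ) (x y : Fin L → ℂ) (k l : Fin L) :
    amb L (fun n => c * x n) y k l = c * amb L x y k l := by
  simp only [amb, mul_sum, mul_assoc]

variable [NeZero L]

lemma exp_two_pi_I_mul_val (a b : Fin L) :
    exp (2 * Real.pi * I * (a.val : ℂ) * (b.val : ℂ) / (L : ℂ)) =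
      ZMod.stdAddChar ((a.val : ZMod L) * (b.val : ZMod L)) := by
  have h := ZMod.stdAddChar_coe (N := L) (a.val * b.val)
  push_cast at h
  rw [h, mul_assoc _ (a.val : ℂ)]

lemma amb_eq_sum_stdAddChar (x y : Fin L → ℂ) (k l : Fin L) :
    amb L x y k l =
      ∑ m : Fin L, x (m + k) * starRingEnd ℂ (y m) *
        ZMod.stdAddChar (-((l.val : ZMod L) * (m.val : ZMod L))) := by
  rw [amb, ← Equiv.sum_comp (Equiv.addRight k)]
  refine sum_congr rfl fun m _ => ?_
  rw [Equiv.coe_addRight, add_sub_cancel_right, AddChar.map_neg_eq_inv, ← exp_two_pi_I_mul_val,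
    ← exp_neg]

lemma amb_timeFreqShift_left (x y : Fin L → ℂ) (k l k' l' : Fin L) :
    amb L (timeFreqShift L k' l' x) y k l =
      ZMod.stdAddChar ((l'.val : ZMod L) * ((k - k').val : ZMod L)) *
        amb L x y (k - k') (l - l') := by
  rw [amb_eq_sum_stdAddChar, amb_eq_sum_stdAddChar, mul_sum]
  refine sum_congr rfl fun m _ => ?_
  have phase : ZMod.stdAddChar ((l'.val : ZMod L) * ((m + (k - k')).val : ZMod L)) *
        ZMod.stdAddChar (-((l.val : ZMod L) * (m.val : ZMod L))) =
      ZMod.stdAddChar ((l'.val : ZMod L) * ((k - k').val : ZMod L)) *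
        ZMod.stdAddChar (-(((l - l').val : ZMod L) * (m.val : ZMod L))) := by
    simp only [← AddChar.map_add_eq_mul, Fin.natCast_val_add_zmod, Fin.natCast_val_sub_zmod]
    ring_nf
  rw [timeFreqShift, exp_two_pi_I_mul_val, add_sub_assoc]
  linear_combination x (m + (k - k')) * starRingEnd ℂ (y m) * phase

end Ambiguity

theorem predictability_general (M N : ℕ) (hM : 0 < M) (hN : 0 < N)
    (h : Fin (M * N) → Fin (M * N) → ℂ)
    (x : Fin (M * N) → ℂ)
    (hA0 : amb (M * N) x x ⟨0, Nat.mul_pos hM hN⟩ ⟨0, Nat.mul_pos hM hN⟩ = 1)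
    (hAvanish : ∀ k' l' : Fin (M * N),
      (∃ a b : Fin (M * N), h a b ≠ 0 ∧ h (a + k') (b + l') ≠ 0) →
      ¬(k' = ⟨0, Nat.mul_pos hM hN⟩ ∧ l' = ⟨0, Nat.mul_pos hM hN⟩) →
      amb (M * N) x x k' l' = 0)
    (y : Fin (M * N) → ℂ)
    (hy : y = fun n => ∑ k : Fin (M * N), ∑ l : Fin (M * N),
      h k l * x (n - k) *
        Complex.exp (2 * Real.pi * Complex.I * (l.val : ℂ) * ((n - k).val : ℂ) / ((M * N : ℕ) : ℂ))) :
    ∀ k l : Fin (M * N), h k l ≠ 0 → amb (M * N) y x k l = h k l := by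
  intro k l hkl
  have : NeZero (M * N) := ⟨(Nat.mul_pos hM hN).ne'⟩
  have hzero : (⟨0, Nat.mul_pos hM hN⟩ : Fin (M * N)) = 0 := rfl
  have hy' : y = fun n => ∑ k', ∑ l', h k' l' * timeFreqShift (M * N) k' l' x n := by
    simp only [hy, timeFreqShift, mul_assoc]
  simp only [hy', amb_sum_left, amb_const_mul_left, amb_timeFreqShift_left]
  rw [← Fintype.sum_prod_type', Fintype.sum_eq_single (k, l)]
  · rw [sub_self, sub_self, ← hzero, hA0, hzero]
    simp
  · rintro ⟨k', l'⟩ hne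
    by_cases hh : h k' l' = 0
    · simp [hh]
    · have hshift : (k - k', l - l') ≠ (0, 0) := by
        simpa [sub_eq_zero, eq_comm] using hne
      rw [hAvanish (k - k') (l - l') ⟨k', l', hh, by simpa using hkl⟩
        (by simpa [hzero] using hshift), mul_zero, mul_zero]

/-- Predictability lemma: if the self-ambiguity of a unit-norm `x` equals `1` at
the origin and vanishes on the punctured difference set `K_S \\ {(0,0)}` of the
support `S` of the channel `h`, then the cross-ambiguity of the noiseless
received sequence `y` with `x` recovers `h` exactly on `S`: `A_{y,x}[k,l] = h[k,l]`. -/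
theorem predictability (M N : ℕ) (hM : 0 < M) (hN : 0 < N)
    (h : Fin (M * N) → Fin (M * N) → ℂ)
    (x : Fin (M * N) → ℂ)
    (hx : ∑ n : Fin (M * N), ‖x n‖ ^ 2 = 1)
    (hA0 : amb (M * N) x x ⟨0, Nat.mul_pos hM hN⟩ ⟨0, Nat.mul_pos hM hN⟩ = 1)
    (hAvanish : ∀ k' l' : Fin (M * N),
      (∃ a b : Fin (M * N), h a b ≠ 0 ∧ h (a + k') (b + l') ≠ 0) →
      ¬(k' = ⟨0, Nat.mul_pos hM hN⟩ ∧ l' = ⟨0, Nat.mul_pos hM hN⟩) →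
      amb (M * N) x x k' l' = 0)
    (y : Fin (M * N) → ℂ)
    (hy : y = fun n => ∑ k : Fin (M * N), ∑ l : Fin (M * N),
      h k l * x (n - k) *
        Complex.exp (2 * Real.pi * Complex.I * (l.val : ℂ) * ((n - k).val : ℂ) / ((M * N : ℕ) : ℂ))) :
    ∀ k l : Fin (M * N), h k l ≠ 0 → amb (M * N) y x k l = h k l :=
  predictability_general M N hM hN h x hA0 hAvanish y hy
end
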